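/- If A is a separable unital C*-algebra and F is a strictly spectral family of representations of A, then F is exhaustive. -/

import Mathlib

variable {A : Type*} [NormedRing A] [StarRing A] [CStarRing A] [NormedAlgebra ℂ A]
  [CompleteSpace A] [StarModule ℂ A]

/-- A (topologically) irreducible representation of a unital C*-algebra on a Hilbert
space: the space is nonzero and the only closed invariant subspaces are `⊥` and `⊤`. -/
def IsIrreducibleRep {H : Type} [NormedAddCommGroup H] [InnerProductSpace ℂ H]
    [CompleteSpace H] (ρ : A →⋆ₐ[ℂ] (H →L[ℂ] H)) : Prop :=
  Nontrivial H ∧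
    ∀ K : Submodule ℂ H, IsClosed (K : Set H) → (∀ (a : A), ∀ ξ ∈ K, ρ a ξ ∈ K) →
      K = ⊥ ∨ K = ⊤

/-- A family `F` of representations of `A` is exhaustive if every primitive ideal
contains the kernel of some member of `F`; i.e. for every irreducible representation
`ρ` there is `i` with `ker (F i) ⊆ ker ρ` (so `ρ` is weakly contained in `F i`). -/
def IsExhaustive {ι : Type*} (Hf : ι → Type) [∀ i, NormedAddCommGroup (Hf i)]
    [∀ i, InnerProductSpace ℂ (Hf i)] [∀ i, CompleteSpace (Hf i)]
    (F : ∀ i, A →⋆ₐ[ℂ] (Hf i →L[ℂ] Hf i)) : Prop :=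
  ∀ (H : Type) [NormedAddCommGroup H] [InnerProductSpace ℂ H] [CompleteSpace H]
    (ρ : A →⋆ₐ[ℂ] (H →L[ℂ] H)), IsIrreducibleRep ρ →
      ∃ i, ∀ a : A, F i a = 0 → ρ a = 0

/-!
Suppose no `ker (F i)` is contained in `ker ρ` for an irreducible `ρ`. Cutting off a dense
sequence of self-adjoint elements by functional calculus gives one sequence `g n` such that every
`F i` kills some `g n` that `ρ` does not kill. Irreducibility and functional calculus then produce
contractions `c n` in the ideal generated by `g n` and elements `y k ∉ ker ρ` with
`c n * y k = y k` for `n < k`. The dyadic mean `b = ∑ 2⁻⁽ⁿ⁺¹⁾ c n` has `‖F i b‖ < 1` for every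
`i`, so `1 - b` is invertible under every `F i`, hence in `A`; but `‖ρ ((1 - b) * y k)‖` is at
most `2¹⁻ᵏ ‖ρ (y k)‖`, so `ρ (1 - b)` is not invertible.
-/

-- star homomorphisms between C⋆-algebras are continuous only through this scoped instance
open scoped CStarAlgebra

namespace StrictlySpectral

section DyadicMean

variable {B : Type*} [NormedRing B] [NormedAlgebra ℝ B]

lemma hasSum_inv_two_pow_succ : HasSum (fun m : ℕ => (2⁻¹ : ℝ) ^ (m + 1)) 1 := by
  have := (hasSum_geometric_of_lt_one (by norm_num : (0 : ℝ) ≤ 2⁻¹) (by norm_num)).mul_left 2⁻¹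
  simp_rw [← pow_succ'] at this
  norm_num at this
  simpa only [one_div] using this

noncomputable def dyadicMean (C : ℕ → B) : B :=
  ∑' m, (2⁻¹ : ℝ) ^ (m + 1) • C m

lemma norm_inv_two_pow_succ_smul_le {C : ℕ → B} (hC : ∀ m, ‖C m‖ ≤ 1) (m : ℕ) :
    ‖(2⁻¹ : ℝ) ^ (m + 1) • C m‖ ≤ (2⁻¹ : ℝ) ^ (m + 1) := by
  rw [norm_smul, Real.norm_of_nonneg (by positivity)]
  exact mul_le_of_le_one_right (by positivity) (hC m)

lemma summable_inv_two_pow_succ_smul [CompleteSpace B] {C : ℕ → B} (hC : ∀ m, ‖C m‖ ≤ 1) :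
    Summable fun m => (2⁻¹ : ℝ) ^ (m + 1) • C m :=
  .of_norm_bounded hasSum_inv_two_pow_succ.summable (norm_inv_two_pow_succ_smul_le hC)

lemma norm_dyadicMean_lt_one {C : ℕ → B} (hC : ∀ m, ‖C m‖ ≤ 1) {n : ℕ} (hn : C n = 0) :
    ‖dyadicMean C‖ < 1 := by
  have hsum : Summable fun m => ‖(2⁻¹ : ℝ) ^ (m + 1) • C m‖ :=
    .of_nonneg_of_le (fun _ => norm_nonneg _) (norm_inv_two_pow_succ_smul_le hC)
      hasSum_inv_two_pow_succ.summable
  calc ‖dyadicMean C‖ ≤ ∑' m, ‖(2⁻¹ : ℝ) ^ (m + 1) • C m‖ := norm_tsum_le_tsum_norm hsum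
    _ < ∑' m : ℕ, (2⁻¹ : ℝ) ^ (m + 1) :=
        hsum.tsum_lt_tsum (norm_inv_two_pow_succ_smul_le hC) (i := n) (by simp [hn])
          hasSum_inv_two_pow_succ.summable
    _ = 1 := hasSum_inv_two_pow_succ.tsum_eq

lemma norm_one_sub_dyadicMean_mul_le [CompleteSpace B] {C : ℕ → B} (hC : ∀ m, ‖C m‖ ≤ 1)
    {Y : B} {k : ℕ} (hY : ∀ m < k, C m * Y = Y) :
    ‖(1 - dyadicMean C) * Y‖ ≤ 2 * 2⁻¹ ^ k * ‖Y‖ := by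
  have hsum : HasSum (fun m => (2⁻¹ : ℝ) ^ (m + 1) • (Y - C m * Y)) ((1 - dyadicMean C) * Y) := by
    rw [sub_mul, one_mul, dyadicMean]
    simp_rw [smul_sub, ← smul_mul_assoc]
    have hY1 : HasSum (fun m => (2⁻¹ : ℝ) ^ (m + 1) • Y) Y := by
      simpa using hasSum_inv_two_pow_succ.smul_const Y
    exact hY1.sub ((summable_inv_two_pow_succ_smul hC).hasSum.mul_right Y)
  have hle : ∀ m, ‖(2⁻¹ : ℝ) ^ (m + 1) • (Y - C m * Y)‖ ≤ ite (k ≤ m) (2⁻¹ ^ m) 0 * ‖Y‖ := by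
    intro m
    split_ifs with hkm
    · calc ‖(2⁻¹ : ℝ) ^ (m + 1) • (Y - C m * Y)‖
            ≤ (2⁻¹ : ℝ) ^ (m + 1) * (‖Y‖ + ‖C m‖ * ‖Y‖) := by
              rw [norm_smul, Real.norm_of_nonneg (by positivity)]
              gcongr
              exact (norm_sub_le _ _).trans (add_le_add_right (norm_mul_le _ _) _)
        _ ≤ (2⁻¹ : ℝ) ^ (m + 1) * (‖Y‖ + 1 * ‖Y‖) := by gcongr; exact hC m
        _ = 2⁻¹ ^ m * ‖Y‖ := by ring
    · rw [hY m (by omega), sub_self, smul_zero, norm_zero, zero_mul]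
  have hbound : Summable fun m : ℕ => ite (k ≤ m) ((2⁻¹ : ℝ) ^ m) 0 * ‖Y‖ := by
    refine ((summable_geometric_of_lt_one (by norm_num : (0 : ℝ) ≤ 2⁻¹) (by norm_num)).mul_right
      ‖Y‖).of_nonneg_of_le (fun m => by positivity) fun m => ?_
    split_ifs <;> simp
  calc _ ≤ ∑' m, ite (k ≤ m) ((2⁻¹ : ℝ) ^ m) 0 * ‖Y‖ := by
        rw [← hsum.tsum_eq]
        exact tsum_of_norm_bounded hbound.hasSum hle
    _ = 2 * 2⁻¹ ^ k * ‖Y‖ := by rw [tsum_mul_right, tsum_geometric_inv_two_ge]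

lemma not_isUnit_one_sub_dyadicMean [CompleteSpace B] {C Y : ℕ → B} (hC : ∀ m, ‖C m‖ ≤ 1)
    (hY : ∀ k, Y k ≠ 0) (hCY : ∀ m k, m < k → C m * Y k = Y k) :
    ¬ IsUnit (1 - dyadicMean C) := by
  intro hunit
  obtain ⟨v, hv⟩ := hunit.exists_left_inv
  have hsmall : ∀ᶠ k in Filter.atTop, ‖v‖ * (2 * 2⁻¹ ^ k) < 1 := by
    have := ((tendsto_pow_atTop_nhds_zero_of_lt_one (by norm_num : (0 : ℝ) ≤ 2⁻¹)
      (by norm_num)).const_mul 2).const_mul ‖v‖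
    simp only [mul_zero] at this
    exact this.eventually (gt_mem_nhds one_pos)
  obtain ⟨k, hk⟩ := hsmall.exists
  have hYk := norm_pos_iff.mpr (hY k)
  have : ‖Y k‖ ≤ ‖v‖ * (2 * 2⁻¹ ^ k) * ‖Y k‖ :=
    calc ‖Y k‖ = ‖v * ((1 - dyadicMean C) * Y k)‖ := by rw [← mul_assoc, hv, one_mul]
      _ ≤ ‖v‖ * (2 * 2⁻¹ ^ k * ‖Y k‖) := (norm_mul_le _ _).trans <| by
          gcongr; exact norm_one_sub_dyadicMean_mul_le hC fun m hm => hCY m k hm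
      _ = _ := by ring
  nlinarith

end DyadicMean

section RealFunctions

variable {r t : ℝ}

lemma mul_inv_max_eq_one (hr : 0 < r) (ht : r ≤ t) : t * (max t r)⁻¹ = 1 := by
  rw [max_eq_left ht, mul_inv_cancel₀ (hr.trans_le ht).ne']

lemma abs_mul_inv_max_le_one (hr : 0 < r) (ht : 0 ≤ t) : |t * (max t r)⁻¹| ≤ 1 := by
  have hmax : 0 < max t r := hr.trans_le (le_max_right t r)
  rw [abs_of_nonneg (mul_nonneg ht (inv_nonneg.mpr hmax.le))]
  exact mul_inv_le_one_of_le₀ (le_max_left t r) hmax.le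

lemma max_abs_sub_eq_mul (hr : 0 < r) (ht : 0 ≤ t) :
    max (|t| - r) 0 = t * (max (t - r) 0 * (max t r)⁻¹) := by
  rw [abs_of_nonneg ht]
  rcases le_total t r with htr | htr
  · rw [max_eq_right (sub_nonpos.mpr htr), zero_mul, mul_zero]
  · rw [max_eq_left (sub_nonneg.mpr htr), max_eq_left htr]
    field_simp [(hr.trans_le htr).ne']

end RealFunctions

section CStarAlgebra

variable {A B C : Type*} [CStarAlgebra A] [CStarAlgebra B] [CStarAlgebra C]

lemma map_dyadicMean (φ : A →⋆ₐ[ℂ] B) {c : ℕ → A} (hc : ∀ m, ‖c m‖ ≤ 1) :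
    φ (dyadicMean c) = dyadicMean fun m => φ (c m) := by
  rw [dyadicMean, dyadicMean, (summable_inv_two_pow_succ_smul hc).map_tsum φ (map_continuous φ)]
  congr with m
  exact LinearMapClass.map_smul_of_tower φ _ _

lemma cfc_cutoff_eq_zero_iff {b : B} (hb : IsSelfAdjoint b) {r : ℝ} (hr : 0 ≤ r) :
    cfc (fun t : ℝ => max (|t| - r) 0) b = 0 ↔ ‖b‖ ≤ r := by
  obtain hB | hB := subsingleton_or_nontrivial B
  · exact iff_of_true (Subsingleton.elim _ _) (by simpa [Subsingleton.elim b 0] using hr)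
  rw [← cfc_zero ℝ b, cfc_eq_cfc_iff_eqOn]
  simp only [Set.EqOn, Pi.zero_apply, max_eq_right_iff, sub_nonpos]
  refine ⟨fun h => ?_, fun h t ht => (spectrum.norm_le_norm_of_mem ht).trans h⟩
  rcases CStarAlgebra.norm_or_neg_norm_mem_spectrum hb with hn | hn
  · simpa using h hn
  · simpa using h hn

lemma map_cfc_cutoff_eq_zero_iff (φ : A →⋆ₐ[ℂ] B) {b : A} (hb : IsSelfAdjoint b) {r : ℝ}
    (hr : 0 ≤ r) : φ (cfc (fun t : ℝ => max (|t| - r) 0) b) = 0 ↔ ‖φ b‖ ≤ r := by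
  rw [φ.map_cfc _ b, cfc_cutoff_eq_zero_iff (hb.map φ) hr]

lemma exists_selfAdjoint_map_eq_zero_norm_map_eq_one (φ : A →⋆ₐ[ℂ] B) (ψ : A →⋆ₐ[ℂ] C)
    {a : A} (hφ : φ a = 0) (hψ : ψ a ≠ 0) : ∃ s : A, IsSelfAdjoint s ∧ φ s = 0 ∧ ‖ψ s‖ = 1 := by
  have hψa : 0 < ‖ψ (star a * a)‖ := by
    rw [map_mul, map_star, CStarRing.norm_star_mul_self]
    exact mul_pos (norm_pos_iff.mpr hψ) (norm_pos_iff.mpr hψ)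
  refine ⟨‖ψ (star a * a)‖⁻¹ • (star a * a),
    IsSelfAdjoint.smul (star_trivial _) (.star_mul_self a), ?_, ?_⟩
  · rw [LinearMapClass.map_smul_of_tower, map_mul φ, hφ, mul_zero, smul_zero]
  · rw [LinearMapClass.map_smul_of_tower, norm_smul, Real.norm_of_nonneg (by positivity),
      inv_mul_cancel₀ hψa.ne']

noncomputable def cutoffSeq (A : Type*) [CStarAlgebra A] [TopologicalSpace.SeparableSpace A]
    (n : ℕ) : A :=
  cfc (fun t : ℝ => max (|t| - 3⁻¹) 0) (TopologicalSpace.denseSeq (selfAdjoint A) n : A)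

lemma exists_cutoffSeq_map_eq_zero [TopologicalSpace.SeparableSpace A] (φ : A →⋆ₐ[ℂ] B)
    (ψ : A →⋆ₐ[ℂ] C) {a : A} (hφ : φ a = 0) (hψ : ψ a ≠ 0) :
    ∃ n, φ (cutoffSeq A n) = 0 ∧ ψ (cutoffSeq A n) ≠ 0 := by
  obtain ⟨s, hs, hφs, hψs⟩ := exists_selfAdjoint_map_eq_zero_norm_map_eq_one φ ψ hφ hψ
  obtain ⟨n, hn⟩ := Metric.denseRange_iff.mp
    (TopologicalSpace.denseRange_denseSeq (selfAdjoint A)) ⟨s, hs⟩ 3⁻¹ (by norm_num)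
  set x : selfAdjoint A := TopologicalSpace.denseSeq (selfAdjoint A) n
  have hxs : ‖(x : A) - s‖ < 3⁻¹ := by
    rwa [dist_comm, Subtype.dist_eq, dist_eq_norm] at hn
  have hφx : ‖φ x‖ ≤ 3⁻¹ := calc
    ‖φ x‖ = ‖φ ((x : A) - s)‖ := by rw [map_sub, hφs, sub_zero]
    _ ≤ ‖(x : A) - s‖ := NonUnitalStarAlgHom.norm_apply_le φ _
    _ ≤ 3⁻¹ := hxs.le
  have hψx : 3⁻¹ < ‖ψ x‖ := by
    have : ‖ψ ((x : A) - s)‖ < 3⁻¹ := (NonUnitalStarAlgHom.norm_apply_le ψ _).trans_lt hxs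
    rw [map_sub] at this
    linarith [norm_sub_norm_le (ψ s) (ψ x), norm_sub_rev (ψ x) (ψ s)]
  refine ⟨n, (map_cfc_cutoff_eq_zero_iff φ x.2 (by norm_num)).mpr hφx, fun h => ?_⟩
  exact (map_cfc_cutoff_eq_zero_iff ψ x.2 (by norm_num)).mp h |>.not_gt hψx

lemma dvd_cfc_of_eqOn_mul {a : A} (ha : IsSelfAdjoint a) {f g : ℝ → ℝ}
    (hfg : ∀ t ∈ spectrum ℝ a, f t = t * g t) (hg : ContinuousOn g (spectrum ℝ a)) :
    a ∣ cfc f a :=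
  ⟨cfc g a, by rw [cfc_congr hfg, cfc_mul (fun t => t) g a, cfc_id' ℝ a]⟩

lemma exists_norm_le_one_mul_eq_self_of_map_ne_zero (ρ : A →⋆ₐ[ℂ] B) {e : A}
    (hρe : ρ e ≠ 0) : ∃ c y : A, ‖c‖ ≤ 1 ∧ c * y = y ∧ ρ y ≠ 0 ∧ e ∣ c ∧ e ∣ y := by
  set z := e * star e
  have hz : IsSelfAdjoint z := .mul_star_self e
  have hspec : ∀ t ∈ spectrum ℝ z, 0 ≤ t := by
    simpa [z] using spectrum_star_mul_self_nonneg (b := star e)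
  have hρz : 0 < ‖ρ z‖ := by
    rwa [norm_pos_iff, map_mul, map_star, Ne, CStarRing.mul_star_self_eq_zero_iff]
  set r := ‖ρ z‖ / 2
  have hr : 0 < r := half_pos hρz
  have hinv : Continuous fun t : ℝ => (max t r)⁻¹ :=
    (continuous_id.max continuous_const).inv₀ fun t => (hr.trans_le (le_max_right t r)).ne'
  have hcut : Continuous fun t : ℝ => max (|t| - r) 0 :=
    (continuous_abs.sub continuous_const).max continuous_const
  -- `c` is `1` wherever the cutoff `y` is nonzero, and both functions of `z` vanish at `0`
  refine ⟨cfc (fun t => t * (max t r)⁻¹) z, cfc (fun t => max (|t| - r) 0) z, ?_, ?_, ?_, ?_, ?_⟩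
  · exact norm_cfc_le zero_le_one fun t ht =>
      (Real.norm_eq_abs _).trans_le (abs_mul_inv_max_le_one hr (hspec t ht))
  · rw [← cfc_mul (fun t => t * (max t r)⁻¹) _ z (continuous_id.mul hinv).continuousOn
      hcut.continuousOn]
    refine cfc_congr fun t ht => ?_
    rcases le_total t r with htr | htr
    · have : max (|t| - r) 0 = 0 := max_eq_right (by rw [abs_of_nonneg (hspec t ht)]; linarith)
      rw [this, mul_zero]
    · rw [mul_inv_max_eq_one hr htr, one_mul]
  · rw [Ne, map_cfc_cutoff_eq_zero_iff ρ hz hr.le, not_le]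
    exact half_lt_self hρz
  · exact (dvd_mul_right e _).trans (dvd_cfc_of_eqOn_mul hz (fun _ _ => rfl) hinv.continuousOn)
  · exact (dvd_mul_right e _).trans <| dvd_cfc_of_eqOn_mul hz
      (fun t ht => max_abs_sub_eq_mul hr (hspec t ht))
      (((continuous_id.sub continuous_const).max continuous_const).mul hinv).continuousOn

end CStarAlgebra

end StrictlySpectral

namespace IsIrreducibleRep

open StrictlySpectral

variable {A : Type*} [CStarAlgebra A] {H : Type} [NormedAddCommGroup H] [InnerProductSpace ℂ H]
  [CompleteSpace H] {ρ : A →⋆ₐ[ℂ] (H →L[ℂ] H)}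

lemma exists_map_mul_mul_ne_zero (hρ : IsIrreducibleRep ρ) {y w : A} (hy : ρ y ≠ 0)
    (hw : ρ w ≠ 0) : ∃ a, ρ (y * a * w) ≠ 0 := by
  by_contra! h
  -- otherwise the common kernel of the `ρ (y * a)` is a closed invariant subspace containing
  -- the range of `ρ w`
  set K : Submodule ℂ H := ⨅ a, (ρ (y * a)).ker
  have hK : ∀ ξ, ξ ∈ K ↔ ∀ a, ρ (y * a) ξ = 0 := by simp [K, Submodule.mem_iInf]
  have hclosed : IsClosed (K : Set H) := by
    simpa [K, Submodule.coe_iInf] using isClosed_iInter fun a => (ρ (y * a)).isClosed_ker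
  have hinv : ∀ b : A, ∀ ξ ∈ K, ρ b ξ ∈ K := fun b ξ hξ => (hK _).mpr fun a => by
    have := (hK ξ).mp hξ (a * b)
    rwa [← mul_assoc, map_mul] at this
  rcases hρ.2 K hclosed hinv with hbot | htop
  · refine hw (ContinuousLinearMap.ext fun ξ => ?_)
    have : ρ w ξ ∈ K := (hK _).mpr fun a => by
      have : ρ (y * a * w) ξ = 0 := by rw [h a]; rfl
      rwa [map_mul] at this
    simpa [hbot] using this
  · refine hy (ContinuousLinearMap.ext fun ξ => ?_)
    simpa using (hK ξ).mp (htop ▸ Submodule.mem_top) 1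

lemma exists_norm_le_one_mul_eq_self (hρ : IsIrreducibleRep ρ) {y : A} (hy : ρ y ≠ 0) (w : A) :
    ∃ c y' : A, ‖c‖ ≤ 1 ∧ c * y' = y' ∧ ρ y' ≠ 0 ∧ y ∣ y' ∧
      (ρ w ≠ 0 → ∃ p q, c = p * w * q) := by
  obtain ⟨e, hye, he, hwe⟩ : ∃ e, y ∣ e ∧ ρ e ≠ 0 ∧ (ρ w ≠ 0 → ∃ p q, e = p * w * q) := by
    by_cases hw : ρ w = 0
    · exact ⟨y, dvd_rfl, hy, fun h => (h hw).elim⟩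
    · obtain ⟨a, ha⟩ := hρ.exists_map_mul_mul_ne_zero hy hw
      exact ⟨y * a * w, ⟨a * w, by rw [mul_assoc]⟩, ha, fun _ => ⟨y * a, 1, (mul_one _).symm⟩⟩
  obtain ⟨c, y', hc, hcy, hy', ⟨p, rfl⟩, hey'⟩ :=
    exists_norm_le_one_mul_eq_self_of_map_ne_zero ρ he
  refine ⟨e * p, y', hc, hcy, hy', hye.trans hey', fun hw => ?_⟩
  obtain ⟨p', q', rfl⟩ := hwe hw
  exact ⟨p', q' * p, by simp only [mul_assoc]⟩

lemma exists_seq_norm_le_one_mul_eq_self (hρ : IsIrreducibleRep ρ) (w : ℕ → A) :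
    ∃ c y : ℕ → A, (∀ n, ‖c n‖ ≤ 1) ∧ (∀ k, ρ (y k) ≠ 0) ∧
      (∀ n k, n < k → c n * y k = y k) ∧ ∀ n, ρ (w n) ≠ 0 → ∃ p q, c n = p * w n * q := by
  choose! c y' hc hcy hy' hdvd hw using fun (y : A) (hy : ρ y ≠ 0) (n : ℕ) =>
    hρ.exists_norm_le_one_mul_eq_self hy (w n)
  have : Nontrivial H := hρ.1
  let y : ℕ → A := fun n => Nat.rec 1 (fun k yk => y' yk k) n
  have hy : ∀ k, ρ (y k) ≠ 0 := fun k => by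
    induction k with
    | zero => simp [y]
    | succ k ih => exact hy' _ ih k
  have hdvd_succ : ∀ n k, n < k → y (n + 1) ∣ y k := fun n k hnk => by
    induction k, hnk using Nat.le_induction with
    | base => exact dvd_rfl
    | succ k _ ih => exact ih.trans (hdvd _ (hy k) k)
  refine ⟨fun n => c (y n) n, y, fun n => hc _ (hy n) n, hy, fun n k hnk => ?_,
    fun n => hw _ (hy n) n⟩
  obtain ⟨r, hr⟩ := hdvd_succ n k hnk
  rw [hr, ← mul_assoc, hcy _ (hy n) n]

end IsIrreducibleRep

open StrictlySpectral

/-- if `A` is a separable unital C*-algebra and `F` is a strictly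
spectral family of representations of `A` (invertibility in `A` is detected by `F`),
then `F` is exhaustive. -/
theorem strictlySpectral_implies_exhaustive [TopologicalSpace.SeparableSpace A]
    {ι : Type*} (Hf : ι → Type)
    [∀ i, NormedAddCommGroup (Hf i)] [∀ i, InnerProductSpace ℂ (Hf i)]
    [∀ i, CompleteSpace (Hf i)] (F : ∀ i, A →⋆ₐ[ℂ] (Hf i →L[ℂ] Hf i))
    (hF : ∀ a : A, IsUnit a ↔ ∀ i, IsUnit (F i a)) :
    IsExhaustive Hf F := by
  intro H _ _ _ ρ hρ
  let _ : CStarAlgebra A :=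
    { ‹NormedRing A›, ‹StarRing A›, ‹CStarRing A›, ‹NormedAlgebra ℂ A›,
      ‹CompleteSpace A›, ‹StarModule ℂ A› with }
  by_contra! hker
  obtain ⟨c, y, hc, hy, hcy, hcw⟩ := hρ.exists_seq_norm_le_one_mul_eq_self (cutoffSeq A)
  have hFc : ∀ i m, ‖F i (c m)‖ ≤ 1 := fun i m =>
    (NonUnitalStarAlgHom.norm_apply_le (F i) _).trans (hc m)
  have hunit : IsUnit (1 - dyadicMean c) := (hF _).mpr fun i => by
    obtain ⟨a, ha, hρa⟩ := hker i
    obtain ⟨n, hn, hρn⟩ := exists_cutoffSeq_map_eq_zero (F i) ρ ha hρa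
    obtain ⟨p, q, hpq⟩ := hcw n hρn
    rw [map_sub, map_one, map_dyadicMean (F i) hc]
    refine isUnit_one_sub_of_norm_lt_one (norm_dyadicMean_lt_one (hFc i) (n := n) ?_)
    rw [hpq, map_mul, map_mul, hn, mul_zero, zero_mul]
  refine not_isUnit_one_sub_dyadicMean (C := fun m => ρ (c m)) (Y := fun k => ρ (y k))
    (fun m => (NonUnitalStarAlgHom.norm_apply_le ρ _).trans (hc m)) hy
    (fun m k hmk => by rw [← map_mul, hcy m k hmk]) ?_
  simpa only [map_sub, map_one, map_dyadicMean ρ hc] using hunit.map ρ
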